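/- (Lemma 2.4) Condition (1.5) holds if and only if d(x) → 0 as |x| → ∞. -/
import Mathlib


open MeasureTheory Filter Real Set
open scoped ENNReal

noncomputable section

/-- Condition (1.5): for every `a > 0`, `∫_{x-a}^{x+a} q(t) dt → ∞` as `|x| → ∞`. -/
def Cond15 (q : ℝ → ℝ) : Prop :=
  ∀ a : ℝ, 0 < a → Tendsto (fun x => ∫ t in (x - a)..(x + a), q t) (cocompact ℝ) atTop

/-- `(u, v)` is a principal fundamental system of solutions (PFSS) of `z'' = q z`.
Local absolute continuity of `u'` together with `u'' = q u` a.e. is encoded via the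
fundamental theorem of calculus: `u' b - u' a = ∫_a^b q t * u t dt` for all `a, b`. -/
def IsPFSS (q u v : ℝ → ℝ) : Prop :=
  ContDiff ℝ 1 u ∧ ContDiff ℝ 1 v ∧
  (∀ a b : ℝ, deriv u b - deriv u a = ∫ t in a..b, q t * u t) ∧
  (∀ a b : ℝ, deriv v b - deriv v a = ∫ t in a..b, q t * v t) ∧
  (∀ x, 0 < u x) ∧ (∀ x, 0 < v x) ∧
  (∀ x, deriv u x < 0) ∧ (∀ x, 0 < deriv v x) ∧
  (∀ x, deriv v x * u x - deriv u x * v x = 1) ∧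
  (∀ x, u x = v x * ∫ t in Set.Ioi x, ((v t) ^ 2)⁻¹) ∧
  Tendsto u atTop (nhds 0) ∧ Tendsto (deriv u) atTop (nhds 0) ∧
  Tendsto v atTop atTop ∧ Tendsto (deriv v) atTop atTop ∧
  Tendsto v atBot (nhds 0) ∧ Tendsto (deriv v) atBot (nhds 0) ∧
  Tendsto u atBot atTop ∧ Tendsto (fun x => |deriv u x|) atBot atTop

/-- The Green function: `G(x,t) = u(x) v(t)` for `x ≥ t`, `G(x,t) = u(t) v(x)` for `x ≤ t`. -/
def GreenFn (u v : ℝ → ℝ) (x t : ℝ) : ℝ := if x ≤ t then u t * v x else u x * v t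

/-- The Green operator `(Gf)(x) = ∫_ℝ G(x,t) f(t) dt`. -/
def GreenOp (u v f : ℝ → ℝ) (x : ℝ) : ℝ := ∫ t, GreenFn u v x t * f t
/-- Lemma 2.4: condition (1.5) holds iff `d(x) → 0` as `|x| → ∞`. -/
theorem lemma_2_4 (q : ℝ → ℝ) (hq_loc : LocallyIntegrable q) (hq : ∀ x, 1 ≤ q x)
    (d : ℝ → ℝ)
    (hd : ∀ x, 0 < d x ∧ (2 : ℝ) = d x * ∫ t in (x - d x)..(x + d x), q t) :
    Cond15 q ↔ Tendsto d (cocompact ℝ) (nhds 0) := by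
  have hInt : ∀ a b : ℝ, IntervalIntegrable q volume a b := fun a b =>
    (hq_loc.integrableOn_isCompact isCompact_uIcc).intervalIntegrable
  have mono : ∀ x s t : ℝ, 0 ≤ s → s ≤ t →
      (∫ r in (x - s)..(x + s), q r) ≤ ∫ r in (x - t)..(x + t), q r := by
    intro x s t hs hst
    exact intervalIntegral.integral_mono_interval (by linarith) (by linarith) (by linarith)
      (Filter.Eventually.of_forall fun r => le_trans zero_le_one (hq r)) (hInt _ _)
  have hval : ∀ x, ∫ t in (x - d x)..(x + d x), q t = 2 / d x := by
    intro x
    obtain ⟨hpos, heq⟩ := hd x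
    field_simp
    linarith
  constructor
  · intro h15
    rw [Metric.tendsto_nhds]
    intro ε hε
    have hev := (h15 ε hε).eventually (eventually_gt_atTop (2 / ε))
    filter_upwards [hev] with x hx
    obtain ⟨hpos, heq⟩ := hd x
    rw [Real.dist_eq, sub_zero, abs_of_pos hpos]
    by_contra hcon
    push_neg at hcon
    have h1 : (∫ t in (x - ε)..(x + ε), q t) ≤ ∫ t in (x - d x)..(x + d x), q t :=
      mono x ε (d x) hε.le hcon
    have h2 : 2 / d x ≤ 2 / ε := by gcongr
    rw [hval x] at h1
    linarith
  · intro hd0 a ha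
    rw [tendsto_atTop]
    intro M
    set ε := min a (2 / max M 1) with hεdef
    have hM : (0 : ℝ) < max M 1 := lt_of_lt_of_le one_pos (le_max_right M 1)
    have hεpos : 0 < ε := lt_min ha (div_pos two_pos hM)
    have hev : ∀ᶠ x in cocompact ℝ, d x < ε := by
      have := hd0.eventually (Metric.ball_mem_nhds 0 hεpos)
      filter_upwards [this] with x hx
      have hpos := (hd x).1
      rw [Real.dist_eq, sub_zero, abs_of_pos hpos] at hx
      exact hx
    filter_upwards [hev] with x hx
    obtain ⟨hpos, heq⟩ := hd x
    have h1 : (∫ t in (x - d x)..(x + d x), q t) ≤ ∫ t in (x - a)..(x + a), q t :=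
      mono x (d x) a hpos.le (le_of_lt (lt_of_lt_of_le hx (min_le_left _ _)))
    have hx2 : d x < 2 / max M 1 := lt_of_lt_of_le hx (min_le_right _ _)
    have h2 : max M 1 ≤ 2 / d x := by
      rw [le_div_iff₀ hpos]
      calc max M 1 * d x ≤ max M 1 * (2 / max M 1) := by nlinarith
        _ = 2 := mul_div_cancel₀ 2 hM.ne'
    rw [hval x] at h1
    linarith [le_max_left M 1]
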